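/- Gauss's summation theorem: if Re(γ-α-β) > 0 and γ is not a nonpositive integer, then Σ_{m=0}^{∞} (α)_m (β)_m / ((γ)_m m!) = Γ(γ)Γ(γ-α-β)/(Γ(γ-α)Γ(γ-β)). -/

import Mathlib

open Complex Polynomial

noncomputable def poch (x : ℂ) (m : ℕ) : ℂ := (ascPochhammer ℂ m).eval x

/-!
Write `F(γ)` for the sum. Euler's limit formula `(x)ₙ₊₁ / (nˣ n!) → 1 / Γ(x)` shows that the
`m`-th term is `O(m ^ (Re(α + β - γ) - 1))`, so the series converges absolutely. The termwise
identity behind the contiguous relation `γ (γ - α - β) F(γ) = (γ - α) (γ - β) F(γ + 1)` telescopes;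
iterating it gives `F(γ) (γ)ₙ (γ - α - β)ₙ = F(γ + n) (γ - α)ₙ (γ - β)ₙ`. As `n → ∞`,
`F(γ + n) → 1` by dominated convergence, and dividing both sides by `(nᵞ n!) (n^(γ-α-β) n!) =
(n^(γ-α) n!) (n^(γ-β) n!)`, Euler's limit formula evaluates `F(γ)`.
-/

open Filter Finset Topology Asymptotics

lemma poch_zero (x : ℂ) : poch x 0 = 1 := by simp [poch]

lemma poch_succ (x : ℂ) (n : ℕ) : poch x (n + 1) = poch x n * (x + n) :=
  ascPochhammer_succ_eval n x

lemma poch_succ_left (x : ℂ) (n : ℕ) : poch x (n + 1) = x * poch (x + 1) n := by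
  simp [poch, ascPochhammer_succ_left, eval_comp]

lemma poch_eq_prod_range (x : ℂ) (n : ℕ) : poch x n = ∏ j ∈ range n, (x + j) := by
  induction n with
  | zero => simp [poch_zero]
  | succ n ih => rw [poch_succ, ih, prod_range_succ]

lemma poch_ne_zero {x : ℂ} (hx : ∀ k : ℕ, x ≠ -k) (n : ℕ) : poch x n ≠ 0 := by
  rw [poch, Ne, ascPochhammer_eval_eq_zero_iff]
  rintro ⟨k, -, hk⟩
  exact hx k (by rw [hk, neg_neg])

lemma add_natCast_ne_neg_natCast {x : ℂ} (hx : ∀ k : ℕ, x ≠ -k) (n k : ℕ) : x + n ≠ -k := by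
  intro h
  exact hx (n + k) (by push_cast; linear_combination h)

lemma norm_poch_ofReal {r : ℝ} (hr : 0 ≤ r) (n : ℕ) :
    ‖poch r n‖ = ∏ j ∈ range n, (r + j) := by
  rw [poch_eq_prod_range, norm_prod]
  refine prod_congr rfl fun j _ => ?_
  rw [← ofReal_natCast, ← ofReal_add, norm_real, Real.norm_of_nonneg (by positivity)]

lemma norm_poch_le (x : ℂ) (n : ℕ) : ‖poch x n‖ ≤ ‖poch ‖x‖ n‖ := by
  rw [norm_poch_ofReal (norm_nonneg x), poch_eq_prod_range, norm_prod]
  gcongr with j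
  exact (norm_add_le _ _).trans_eq (by rw [norm_natCast])

lemma norm_poch_ofReal_le {x : ℂ} {r : ℝ} (hr : 0 ≤ r) (hrx : r ≤ x.re) (n : ℕ) :
    ‖poch r n‖ ≤ ‖poch x n‖ := by
  rw [norm_poch_ofReal hr, poch_eq_prod_range, norm_prod]
  gcongr with j
  calc r + j ≤ (x + j).re := by simpa using hrx
    _ ≤ ‖x + j‖ := re_le_norm _

lemma tendsto_norm_poch_add_natCast (x : ℂ) {n : ℕ} (hn : n ≠ 0) :
    Tendsto (fun k : ℕ => ‖poch (x + k) n‖) atTop atTop := by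
  refine (ascPochhammer ℂ n).tendsto_norm_atTop ?_ <| tendsto_norm_cobounded_atTop.comp <|
    (tendsto_const_add_cobounded x).comp tendsto_natCast_atTop_cobounded
  rw [degree_eq_natDegree (monic_ascPochhammer ℂ n).ne_zero, ascPochhammer_natDegree]
  exact_mod_cast Nat.pos_of_ne_zero hn

lemma inv_GammaSeq_eq (x : ℂ) (n : ℕ) :
    (GammaSeq x n)⁻¹ = poch x (n + 1) / ((n : ℂ) ^ x * n.factorial) := by
  rw [GammaSeq, poch_eq_prod_range, inv_div]

lemma poch_succ_eq_inv_GammaSeq_mul (x : ℂ) {n : ℕ} (hn : n ≠ 0) :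
    poch x (n + 1) = (GammaSeq x n)⁻¹ * ((n : ℂ) ^ x * n.factorial) := by
  rw [inv_GammaSeq_eq, div_mul_cancel₀]
  exact mul_ne_zero (by simp [hn]) (by exact_mod_cast n.factorial_ne_zero)

lemma tendsto_inv_GammaSeq (x : ℂ) :
    Tendsto (fun n => (GammaSeq x n)⁻¹) atTop (𝓝 (Gamma x)⁻¹) := by
  by_cases! hx : ∀ k : ℕ, x ≠ -k
  · exact (GammaSeq_tendsto_Gamma x).inv₀ (Gamma_ne_zero hx)
  obtain ⟨k, rfl⟩ := hx
  rw [Gamma_neg_nat_eq_zero, inv_zero]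
  refine tendsto_const_nhds.congr' ?_
  filter_upwards [eventually_ge_atTop k] with n hn
  have : poch (-k) (n + 1) = 0 := by
    rw [poch_eq_prod_range]
    exact prod_eq_zero (mem_range.2 (Nat.lt_succ_of_le hn)) (by ring)
  rw [inv_GammaSeq_eq, this, zero_div]

noncomputable def gaussTerm (α β γ : ℂ) (m : ℕ) : ℂ :=
  poch α m * poch β m / (poch γ m * (m.factorial : ℂ))

section GaussTerm

variable {α β γ : ℂ}

lemma gaussTerm_zero : gaussTerm α β γ 0 = 1 := by simp [gaussTerm, poch_zero]

-- No condition on `γ`: where `poch γ (n + 1) = 0`, also `GammaSeq γ n = 0`, and both sides vanish.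
lemma succ_mul_gaussTerm_succ {n : ℕ} (hn : n ≠ 0) :
    ((n : ℂ) + 1) * gaussTerm α β γ (n + 1) =
      (n : ℂ) ^ (α + β - γ) * (GammaSeq γ n * (GammaSeq α n)⁻¹ * (GammaSeq β n)⁻¹) := by
  have hn' : (n : ℂ) ≠ 0 := Nat.cast_ne_zero.2 hn
  rw [gaussTerm, poch_succ_eq_inv_GammaSeq_mul α hn, poch_succ_eq_inv_GammaSeq_mul β hn,
    poch_succ_eq_inv_GammaSeq_mul γ hn, cpow_sub _ _ hn', cpow_add _ _ hn', Nat.factorial_succ]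
  have : (n : ℂ) ^ γ ≠ 0 := by simp [hn]
  have : (n.factorial : ℂ) ≠ 0 := by exact_mod_cast n.factorial_ne_zero
  have : (n : ℂ) + 1 ≠ 0 := by exact_mod_cast n.succ_ne_zero
  push_cast
  field_simp

variable (α β γ) in
lemma isBigO_succ_mul_gaussTerm_succ :
    (fun n : ℕ => ((n : ℂ) + 1) * gaussTerm α β γ (n + 1)) =O[atTop]
      fun n : ℕ => (n : ℝ) ^ (α + β - γ).re := by
  have hpow : (fun n : ℕ => (n : ℂ) ^ (α + β - γ)) =O[atTop]
      fun n : ℕ => (n : ℝ) ^ (α + β - γ).re :=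
    IsBigO.of_bound 1 <| by
      filter_upwards [eventually_gt_atTop 0] with n hn
      rw [norm_natCast_cpow_of_pos hn, Real.norm_of_nonneg (by positivity), one_mul]
  have hratio := (((GammaSeq_tendsto_Gamma γ).mul (tendsto_inv_GammaSeq α)).mul
    (tendsto_inv_GammaSeq β)).isBigO_one ℝ
  refine (hpow.mul hratio).congr' ?_ (by simp)
  filter_upwards [eventually_ne_atTop 0] with n hn
  exact (succ_mul_gaussTerm_succ hn).symm

lemma tendsto_natCast_mul_gaussTerm (h : 0 < (γ - α - β).re) :
    Tendsto (fun m : ℕ => (m : ℂ) * gaussTerm α β γ m) atTop (𝓝 0) := by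
  rw [← tendsto_add_atTop_iff_nat 1]
  push_cast
  refine (isBigO_succ_mul_gaussTerm_succ α β γ).trans_tendsto ?_
  have : (α + β - γ).re = -(γ - α - β).re := by simp; ring
  rw [this]
  exact (tendsto_rpow_neg_atTop h).comp tendsto_natCast_atTop_atTop

lemma summable_norm_gaussTerm (h : 0 < (γ - α - β).re) :
    Summable fun m => ‖gaussTerm α β γ m‖ := by
  rw [← summable_nat_add_iff 1]
  have hinv : (fun n : ℕ => ((n : ℂ) + 1)⁻¹) =O[atTop] fun n : ℕ => (n : ℝ) ^ (-1 : ℝ) :=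
    IsBigO.of_bound 1 <| by
      filter_upwards [eventually_gt_atTop 0] with n hn
      rw [Real.rpow_neg_one, one_mul, norm_inv, Real.norm_of_nonneg (by positivity)]
      gcongr
      rw [← Nat.cast_add_one, norm_natCast, Nat.cast_add_one]
      linarith
  have hbigO : (fun n : ℕ => gaussTerm α β γ (n + 1)) =O[atTop]
      fun n : ℕ => (n : ℝ) ^ ((α + β - γ).re + -1) := by
    refine ((isBigO_succ_mul_gaussTerm_succ α β γ).mul hinv).congr' ?_ ?_
    · filter_upwards with n
      field_simp
    · filter_upwards [eventually_gt_atTop 0] with n hn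
      rw [Real.rpow_add (by positivity)]
  refine summable_of_isBigO_nat (Real.summable_nat_rpow.2 ?_) hbigO.norm_left
  have : (α + β - γ).re = -(γ - α - β).re := by simp; ring
  linarith

lemma gaussTerm_contiguous (hγ : ∀ k : ℕ, γ ≠ -k) (m : ℕ) :
    γ * (γ - α - β) * gaussTerm α β γ m - (γ - α) * (γ - β) * gaussTerm α β (γ + 1) m =
      γ * (m * gaussTerm α β γ m - (m + 1) * gaussTerm α β γ (m + 1)) := by
  have hγm : γ + m ≠ 0 := by simpa using add_natCast_ne_neg_natCast hγ m 0
  have hpoch : poch (γ + 1) m = poch γ m * (γ + m) / γ := by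
    rw [← poch_succ, poch_succ_left, mul_div_cancel_left₀ _ (by simpa using hγ 0)]
  have := poch_ne_zero hγ m
  have : (m.factorial : ℂ) ≠ 0 := by exact_mod_cast m.factorial_ne_zero
  have : (m : ℂ) + 1 ≠ 0 := by exact_mod_cast m.succ_ne_zero
  simp only [gaussTerm, hpoch, poch_succ, Nat.factorial_succ]
  push_cast
  field_simp
  ring

lemma tsum_gaussTerm_contiguous (h : 0 < (γ - α - β).re) (hγ : ∀ k : ℕ, γ ≠ -k) :
    γ * (γ - α - β) * ∑' m, gaussTerm α β γ m =
      (γ - α) * (γ - β) * ∑' m, gaussTerm α β (γ + 1) m := by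
  have h₁ : 0 < (γ + 1 - α - β).re := by simp only [sub_re, add_re, one_re] at h ⊢; linarith
  have hsum := (((summable_norm_gaussTerm h).of_norm.hasSum.mul_left (γ * (γ - α - β))).sub
    ((summable_norm_gaussTerm h₁).of_norm.hasSum.mul_left ((γ - α) * (γ - β))))
  have htele : Tendsto (fun N => ∑ m ∈ range N,
      (γ * (γ - α - β) * gaussTerm α β γ m - (γ - α) * (γ - β) * gaussTerm α β (γ + 1) m))
      atTop (𝓝 0) := by
    simp_rw [gaussTerm_contiguous hγ, ← Nat.cast_succ, ← mul_sum,
      sum_range_sub' (fun m : ℕ => m * gaussTerm α β γ m)]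
    simpa using (tendsto_natCast_mul_gaussTerm h).const_mul (-γ)
  exact sub_eq_zero.1 (tendsto_nhds_unique hsum.tendsto_sum_nat htele)

lemma tsum_gaussTerm_mul_poch (h : 0 < (γ - α - β).re) (hγ : ∀ k : ℕ, γ ≠ -k) (n : ℕ) :
    (∑' m, gaussTerm α β γ m) * (poch γ n * poch (γ - α - β) n) =
      (∑' m, gaussTerm α β (γ + n) m) * (poch (γ - α) n * poch (γ - β) n) := by
  induction n with
  | zero => simp [poch_zero]
  | succ n ih =>
    have hn : 0 < (γ + n - α - β).re := by
      simp only [sub_re, add_re, natCast_re] at h ⊢; linarith [(n.cast_nonneg : (0 : ℝ) ≤ n)]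
    have hstep := tsum_gaussTerm_contiguous hn (add_natCast_ne_neg_natCast hγ n)
    simp only [poch_succ, Nat.cast_succ, ← add_assoc]
    linear_combination (γ + n) * (γ - α - β + n) * ih + poch (γ - α) n * poch (γ - β) n * hstep

lemma norm_gaussTerm_le {R : ℝ} (hR : 0 < R) (hRγ : R ≤ γ.re) (m : ℕ) :
    ‖gaussTerm α β γ m‖ ≤ ‖gaussTerm ‖α‖ ‖β‖ R m‖ := by
  simp only [gaussTerm, norm_div, norm_mul, norm_natCast]
  have : 0 < ‖poch R m‖ := by
    rw [norm_poch_ofReal hR.le]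
    exact prod_pos fun j _ => by positivity
  gcongr
  · exact norm_poch_le α m
  · exact norm_poch_le β m
  · exact norm_poch_ofReal_le hR.le hRγ m

variable (α β γ) in
lemma tendsto_gaussTerm_add_natCast (m : ℕ) :
    Tendsto (fun n : ℕ => gaussTerm α β (γ + n) (m + 1)) atTop (𝓝 0) := by
  rw [tendsto_zero_iff_norm_tendsto_zero]
  simp only [gaussTerm, norm_div, norm_mul]
  exact tendsto_const_nhds.div_atTop <|
    (tendsto_norm_poch_add_natCast γ m.succ_ne_zero).atTop_mul_const
      (by simp [Nat.factorial_pos])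

variable (α β γ) in
lemma tendsto_tsum_gaussTerm_add_natCast :
    Tendsto (fun n : ℕ => ∑' m, gaussTerm α β (γ + n) m) atTop (𝓝 1) := by
  set R := ‖α‖ + ‖β‖ + 1
  have hR : 0 < R := by positivity
  have hbound := summable_norm_gaussTerm (α := ‖α‖) (β := ‖β‖) (γ := R) (by simp [R]; linarith)
  have hlim : ∀ m, Tendsto (fun n : ℕ => gaussTerm α β (γ + n) m) atTop
      (𝓝 (if m = 0 then 1 else 0)) := by
    rintro (_ | m)
    · simp [gaussTerm_zero]
    · simpa using tendsto_gaussTerm_add_natCast α β γ m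
  have hdom : ∀ᶠ n : ℕ in atTop, ∀ m, ‖gaussTerm α β (γ + n) m‖ ≤ ‖gaussTerm ‖α‖ ‖β‖ R m‖ := by
    have hγn := tendsto_atTop_add_const_left _ γ.re tendsto_natCast_atTop_atTop
    filter_upwards [hγn.eventually_ge_atTop R] with n hn
    exact norm_gaussTerm_le hR (by simpa using hn)
  simpa using tendsto_tsum_of_dominated_convergence hbound hlim hdom

lemma tsum_gaussTerm_mul_inv_GammaSeq (h : 0 < (γ - α - β).re) (hγ : ∀ k : ℕ, γ ≠ -k)
    {n : ℕ} (hn : n ≠ 0) :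
    (∑' m, gaussTerm α β γ m) * ((GammaSeq γ n)⁻¹ * (GammaSeq (γ - α - β) n)⁻¹) =
      (∑' m, gaussTerm α β (γ + (n + 1 : ℕ)) m) *
        ((GammaSeq (γ - α) n)⁻¹ * (GammaSeq (γ - β) n)⁻¹) := by
  have hn' : (n : ℂ) ≠ 0 := Nat.cast_ne_zero.2 hn
  have hpow : (n : ℂ) ^ γ * (n : ℂ) ^ (γ - α - β) = (n : ℂ) ^ (γ - α) * (n : ℂ) ^ (γ - β) := by
    rw [← cpow_add _ _ hn', ← cpow_add _ _ hn']
    ring_nf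
  rw [inv_GammaSeq_eq, inv_GammaSeq_eq, inv_GammaSeq_eq, inv_GammaSeq_eq, div_mul_div_comm,
    div_mul_div_comm, ← mul_div_assoc, ← mul_div_assoc, tsum_gaussTerm_mul_poch h hγ]
  congr 1
  linear_combination (n.factorial : ℂ) ^ 2 * hpow

end GaussTerm

theorem gauss_summation (α β γ : ℂ) (h : 0 < (γ - α - β).re)
    (hγ : ∀ k : ℕ, γ ≠ -k) :
    HasSum (fun m : ℕ => poch α m * poch β m / (poch γ m * (m.factorial : ℂ)))
      (Complex.Gamma γ * Complex.Gamma (γ - α - β) /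
        (Complex.Gamma (γ - α) * Complex.Gamma (γ - β))) := by
  set S := ∑' m, gaussTerm α β γ m
  have hleft : Tendsto (fun n => S * ((GammaSeq γ n)⁻¹ * (GammaSeq (γ - α - β) n)⁻¹)) atTop
      (𝓝 (S * ((Gamma γ)⁻¹ * (Gamma (γ - α - β))⁻¹))) :=
    tendsto_const_nhds.mul ((tendsto_inv_GammaSeq γ).mul (tendsto_inv_GammaSeq (γ - α - β)))
  have hright := ((tendsto_tsum_gaussTerm_add_natCast α β γ).comp (tendsto_add_atTop_nat 1)).mul
    ((tendsto_inv_GammaSeq (γ - α)).mul (tendsto_inv_GammaSeq (γ - β)))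
  have hlim := tendsto_nhds_unique (hleft.congr' <| (eventually_ne_atTop 0).mono
    fun n hn => tsum_gaussTerm_mul_inv_GammaSeq h hγ hn) hright
  have hS : S = Gamma γ * Gamma (γ - α - β) / (Gamma (γ - α) * Gamma (γ - β)) := by
    have := Gamma_ne_zero hγ
    have := Gamma_ne_zero_of_re_pos h
    calc S = S * ((Gamma γ)⁻¹ * (Gamma (γ - α - β))⁻¹) * (Gamma γ * Gamma (γ - α - β)) := by
          field_simp
      _ = _ := by rw [hlim, one_mul, div_eq_mul_inv, mul_inv]; ring
  exact hS ▸ (summable_norm_gaussTerm h).of_norm.hasSum
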